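/- Let a ≥ 0, b > 0, σ > 0, and let ν be a measure on (0,∞) with ∫_0^∞ (z∧1) ν(dz) < ∞ and ∫_{(1,∞)} log z ν(dz) < ∞. Define, for x ≥ 0, (AV)(x) := (a − bx)/(1+x) − σ²x/(2(1+x)²) + ∫_0^∞ log(1 + z/(1+x)) ν(dz). Then the function AV is bounded on [0,∞), and AV(x) → −b as x → ∞. -/

import Mathlib

/-!
Each of the three terms of `AV` is controlled separately. The drift and diffusion terms are
explicit rational functions of `x`, bounded on `[0, ∞)` with limits `-b` and `0`. The jump term
is, since `z / (1 + x) ≤ z`, dominated uniformly in `x ≥ 0` by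
`log (1 + z) ≤ (1 + log 2) (z ∧ 1) + 1_{z > 1} log z`, which is `ν`-integrable by the two moment
conditions; dominated convergence then sends it to `0`.
-/

open MeasureTheory Filter Set
open scoped ENNReal

/-- The generator of the jump-diffusion CIR process applied to the Foster-Lyapunov
function `V(x) = log(1+x)`. -/
noncomputable def AV (a b σ : ℝ) (ν : Measure ℝ) (x : ℝ) : ℝ :=
  (a - b * x) / (1 + x) - σ ^ 2 * x / (2 * (1 + x) ^ 2) +
    ∫ z in Set.Ioi (0 : ℝ), Real.log (1 + z / (1 + x)) ∂ν

open Topology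

lemma tendsto_const_div_one_add_atTop (c : ℝ) :
    Tendsto (fun x : ℝ => c / (1 + x)) atTop (𝓝 0) :=
  tendsto_const_nhds.div_atTop (tendsto_atTop_add_const_left _ 1 tendsto_id)

lemma abs_drift_le (a b : ℝ) {x : ℝ} (hx : 0 ≤ x) :
    |(a - b * x) / (1 + x)| ≤ |a| + |b| := by
  have h1x : 0 < 1 + x := by linarith
  rw [abs_div, abs_of_pos h1x, div_le_iff₀ h1x]
  calc |a - b * x| ≤ |a| + |b| * x := by
        simpa [abs_mul, abs_of_nonneg hx] using abs_sub a (b * x)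
    _ ≤ (|a| + |b|) * (1 + x) := by nlinarith [abs_nonneg a, abs_nonneg b]

lemma tendsto_drift (a b : ℝ) :
    Tendsto (fun x : ℝ => (a - b * x) / (1 + x)) atTop (𝓝 (-b)) := by
  have h := (tendsto_const_div_one_add_atTop (a + b)).const_add (-b)
  rw [add_zero] at h
  refine h.congr' ?_
  filter_upwards [eventually_gt_atTop 0] with x hx
  field_simp
  ring

lemma diffusion_le (σ : ℝ) {x : ℝ} (hx : 0 ≤ x) :
    σ ^ 2 * x / (2 * (1 + x) ^ 2) ≤ σ ^ 2 / (2 * (1 + x)) := by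
  rw [div_le_div_iff₀ (by positivity) (by positivity)]
  nlinarith [sq_nonneg σ]

lemma abs_diffusion_le (σ : ℝ) {x : ℝ} (hx : 0 ≤ x) :
    |σ ^ 2 * x / (2 * (1 + x) ^ 2)| ≤ σ ^ 2 / 2 := by
  rw [abs_of_nonneg (by positivity)]
  refine (diffusion_le σ hx).trans ?_
  gcongr
  linarith

lemma tendsto_diffusion (σ : ℝ) :
    Tendsto (fun x : ℝ => σ ^ 2 * x / (2 * (1 + x) ^ 2)) atTop (𝓝 0) := by
  have h := (tendsto_const_div_one_add_atTop (σ ^ 2 / 2)).congr fun x => by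
    rw [div_div]
  refine tendsto_of_tendsto_of_tendsto_of_le_of_le' tendsto_const_nhds h ?_ ?_
  · filter_upwards [eventually_ge_atTop 0] with x hx
    positivity
  · filter_upwards [eventually_ge_atTop 0] with x hx
    exact diffusion_le σ hx

noncomputable def jumpDominator (z : ℝ) : ℝ :=
  (1 + Real.log 2) * min z 1 + (Ioi 1).indicator Real.log z

lemma log_one_add_le_jumpDominator {z : ℝ} (hz : 0 ≤ z) :
    Real.log (1 + z) ≤ jumpDominator z := by
  unfold jumpDominator
  rcases le_or_gt z 1 with h | h
  · rw [min_eq_left h, indicator_of_notMem (by simpa using h)]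
    have hlog := Real.log_le_sub_one_of_pos (show 0 < 1 + z by linarith)
    nlinarith [Real.log_nonneg (show (1 : ℝ) ≤ 2 by norm_num)]
  · rw [min_eq_right h.le, indicator_of_mem (mem_Ioi.mpr h)]
    have hlog : Real.log (1 + z) ≤ Real.log (2 * z) := Real.log_le_log (by linarith) (by linarith)
    rw [Real.log_mul two_ne_zero (by linarith)] at hlog
    linarith

lemma abs_log_one_add_div_le_jumpDominator {z x : ℝ} (hz : 0 < z) (hx : 0 ≤ x) :
    |Real.log (1 + z / (1 + x))| ≤ jumpDominator z := by
  have h1x : 0 < 1 + x := by linarith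
  have hdiv : 0 ≤ z / (1 + x) := by positivity
  have hdiv_le : z / (1 + x) ≤ z := div_le_self hz.le (by linarith)
  rw [abs_of_nonneg (Real.log_nonneg (by linarith))]
  exact (Real.log_le_log (by linarith) (by linarith)).trans (log_one_add_le_jumpDominator hz.le)

lemma integrable_jumpDominator (ν : Measure ℝ)
    (hν : ∫⁻ z in Ioi (0 : ℝ), ENNReal.ofReal (min z 1) ∂ν < ⊤)
    (hνlog : ∫⁻ z in Ioi (1 : ℝ), ENNReal.ofReal (Real.log z) ∂ν < ⊤) :
    Integrable jumpDominator (ν.restrict (Ioi 0)) := by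
  refine Integrable.add (Integrable.const_mul ?_ _) ?_
  · refine ⟨(measurable_id.min measurable_const).aestronglyMeasurable, ?_⟩
    rwa [hasFiniteIntegral_iff_ofReal ((ae_restrict_iff' measurableSet_Ioi).2
      (ae_of_all _ fun z (hz : 0 < z) => by positivity))]
  · rw [integrable_indicator_iff measurableSet_Ioi, IntegrableOn,
      Measure.restrict_restrict measurableSet_Ioi,
      inter_eq_self_of_subset_left (Ioi_subset_Ioi zero_le_one)]
    refine ⟨Real.measurable_log.aestronglyMeasurable, ?_⟩
    rwa [hasFiniteIntegral_iff_ofReal ((ae_restrict_iff' measurableSet_Ioi).2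
      (ae_of_all _ fun z (hz : 1 < z) => Real.log_nonneg hz.le))]

section

variable {ν : Measure ℝ}

lemma ae_abs_log_one_add_div_le_jumpDominator {x : ℝ} (hx : 0 ≤ x) :
    ∀ᵐ z ∂ν.restrict (Ioi 0), ‖Real.log (1 + z / (1 + x))‖ ≤ jumpDominator z :=
  (ae_restrict_iff' measurableSet_Ioi).2 (ae_of_all _ fun _ hz =>
    abs_log_one_add_div_le_jumpDominator hz hx)

lemma abs_integral_log_one_add_div_le (hG : Integrable jumpDominator (ν.restrict (Ioi 0)))
    {x : ℝ} (hx : 0 ≤ x) :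
    |∫ z in Ioi (0 : ℝ), Real.log (1 + z / (1 + x)) ∂ν| ≤ ∫ z in Ioi (0 : ℝ), jumpDominator z ∂ν :=
  norm_integral_le_of_norm_le hG (ae_abs_log_one_add_div_le_jumpDominator hx)

lemma tendsto_integral_log_one_add_div (hG : Integrable jumpDominator (ν.restrict (Ioi 0))) :
    Tendsto (fun x : ℝ => ∫ z in Ioi (0 : ℝ), Real.log (1 + z / (1 + x)) ∂ν) atTop (𝓝 0) := by
  have hlim : ∀ z : ℝ, Tendsto (fun x : ℝ => Real.log (1 + z / (1 + x))) atTop (𝓝 0) := by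
    intro z
    have h := (tendsto_const_div_one_add_atTop z).const_add 1
    rw [add_zero] at h
    have h_log := (Real.continuousAt_log one_ne_zero).tendsto.comp h
    rwa [Real.log_one] at h_log
  simpa using tendsto_integral_filter_of_dominated_convergence jumpDominator
    (Eventually.of_forall fun x => (Real.measurable_log.comp
      (measurable_const.add (measurable_id.div_const _))).aestronglyMeasurable)
    ((eventually_ge_atTop 0).mono fun _ hx => ae_abs_log_one_add_div_le_jumpDominator hx)
    hG (ae_of_all _ hlim)

end

theorem AV_bounded_and_tendsto_general (a b σ : ℝ)
    (ν : Measure ℝ)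
    (hν : ∫⁻ z in Set.Ioi (0 : ℝ), ENNReal.ofReal (min z 1) ∂ν < ⊤)
    (hνlog : ∫⁻ z in Set.Ioi (1 : ℝ), ENNReal.ofReal (Real.log z) ∂ν < ⊤) :
    (∃ M : ℝ, ∀ x : ℝ, 0 ≤ x → |AV a b σ ν x| ≤ M) ∧
      Filter.Tendsto (AV a b σ ν) Filter.atTop (nhds (-b)) := by
  have hG := integrable_jumpDominator ν hν hνlog
  refine ⟨⟨|a| + |b| + σ ^ 2 / 2 + ∫ z in Ioi (0 : ℝ), jumpDominator z ∂ν, fun x hx => ?_⟩, ?_⟩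
  · calc |AV a b σ ν x|
        ≤ |(a - b * x) / (1 + x)| + |σ ^ 2 * x / (2 * (1 + x) ^ 2)|
          + |∫ z in Ioi (0 : ℝ), Real.log (1 + z / (1 + x)) ∂ν| :=
          (abs_add_le _ _).trans (by gcongr; exact abs_sub _ _)
      _ ≤ _ := by
          gcongr
          exacts [abs_drift_le a b hx, abs_diffusion_le σ hx, abs_integral_log_one_add_div_le hG hx]
  · have h := ((tendsto_drift a b).sub (tendsto_diffusion σ)).add
      (tendsto_integral_log_one_add_div hG)
    rwa [sub_zero, add_zero] at h

theorem AV_bounded_and_tendsto (a b σ : ℝ) (ha : 0 ≤ a) (hb : 0 < b) (hσ : 0 < σ)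
    (ν : Measure ℝ) (hνsupp : ν (Set.Iic 0) = 0)
    (hν : ∫⁻ z in Set.Ioi (0 : ℝ), ENNReal.ofReal (min z 1) ∂ν < ⊤)
    (hνlog : ∫⁻ z in Set.Ioi (1 : ℝ), ENNReal.ofReal (Real.log z) ∂ν < ⊤) :
    (∃ M : ℝ, ∀ x : ℝ, 0 ≤ x → |AV a b σ ν x| ≤ M) ∧
      Filter.Tendsto (AV a b σ ν) Filter.atTop (nhds (-b)) :=
  AV_bounded_and_tendsto_general a b σ ν hν hνlog
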